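/- arXiv:2410.21406 — 5 statements merged into one kernel-verified Lean document; each statement's English description precedes it below -/
import Mathlib

section
/- Let f : ℝ^d × ℝ^n → ℝ^d be continuous, L-Lipschitz in the state, and odd in the action, let a : [0,2] → ℝ^n be a continuous action curve satisfying the reversal condition a(1+t) = -a(1-t) for all t ∈ [0,1], and let x : [0,2] → ℝ^d be differentiable with x'(t) = f(x(t), a(t)) for all t ∈ [0,2]. Then x(1+t) = x(1-t) for all t ∈ [0,1]; in particular x(2) = x(0), i.e. running the reversed action sequence returns the system exactly to its initial state. -/
open Set

/-!
Put `y t = x (1 + t)` and `z t = x (1 - t)`. Since `f` is odd in the action and the action is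
reversed about `t = 1`, both curves solve the same ODE `u' = f (u, a (1 + t))` on `[0, 1]`, and
they agree at `t = 0`. This vector field is Lipschitz in the state, so uniqueness of solutions
forces `y = z`.
-/

theorem ODE_solution_reflect_eq_of_odd_in_time {E : Type*} [NormedAddCommGroup E]
    [NormedSpace ℝ E] {v : ℝ → E → E} {K : NNReal} (hv : ∀ t, LipschitzWith K (v t))
    {x : ℝ → E} {c T : ℝ} (hx : ∀ t ∈ Icc (c - T) (c + T), HasDerivAt x (v t (x t)) t)
    (hodd : ∀ t ∈ Icc 0 T, ∀ u, v (c + t) u = -v (c - t) u) :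
    ∀ t ∈ Icc 0 T, x (c + t) = x (c - t) := by
  have hforward : ∀ t ∈ Icc 0 T, HasDerivAt (fun s ↦ x (c + s)) (v (c + t) (x (c + t))) t :=
    fun t ht ↦ (hx (c + t) ⟨by linarith [ht.1, ht.2], by linarith [ht.2]⟩).comp_const_add c t
  have hbackward : ∀ t ∈ Icc 0 T, HasDerivAt (fun s ↦ x (c - s)) (v (c + t) (x (c - t))) t := by
    intro t ht
    rw [hodd t ht]
    exact (hx (c - t) ⟨by linarith [ht.2], by linarith [ht.1, ht.2]⟩).comp_const_sub c t
  refine fun t ht ↦ ODE_solution_unique (v := fun s ↦ v (c + s)) (fun s ↦ hv (c + s))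
    (fun s hs ↦ (hforward s hs).continuousAt.continuousWithinAt)
    (fun s hs ↦ (hforward s (Ico_subset_Icc_self hs)).hasDerivWithinAt)
    (fun s hs ↦ (hbackward s hs).continuousAt.continuousWithinAt)
    (fun s hs ↦ (hbackward s (Ico_subset_Icc_self hs)).hasDerivWithinAt)
    (by simp) ht

theorem trajectory_reversibility_general
    {d n : ℕ} (f : EuclideanSpace ℝ (Fin d) × EuclideanSpace ℝ (Fin n) → EuclideanSpace ℝ (Fin d))
    (L : ℝ)
    (hf_lip : ∀ (x x' : EuclideanSpace ℝ (Fin d)) (a : EuclideanSpace ℝ (Fin n)),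
      ‖f (x, a) - f (x', a)‖ ≤ L * ‖x - x'‖)
    (hf_odd : ∀ (x : EuclideanSpace ℝ (Fin d)) (a : EuclideanSpace ℝ (Fin n)),
      f (x, -a) = -f (x, a))
    (a : ℝ → EuclideanSpace ℝ (Fin n))
    (ha_rev : ∀ t ∈ Icc (0:ℝ) 1, a (1 + t) = -a (1 - t))
    (x : ℝ → EuclideanSpace ℝ (Fin d))
    (hx : ∀ t ∈ Icc (0:ℝ) 2, HasDerivAt x (f (x t, a t)) t) :
    (∀ t ∈ Icc (0:ℝ) 1, x (1 + t) = x (1 - t)) ∧ x 2 = x 0 := by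
  have hlip : ∀ t, LipschitzWith L.toNNReal (fun u ↦ f (u, a t)) := fun t ↦
    LipschitzWith.of_dist_le' fun u u' ↦ by simpa only [dist_eq_norm] using hf_lip u u' (a t)
  have hsymm : ∀ t ∈ Icc (0:ℝ) 1, x (1 + t) = x (1 - t) :=
    ODE_solution_reflect_eq_of_odd_in_time hlip (c := 1) (T := 1)
      (by rw [sub_self, one_add_one_eq_two]; exact hx)
      fun t ht u ↦ by simp only [ha_rev t ht, hf_odd]
  refine ⟨hsymm, ?_⟩
  simpa [one_add_one_eq_two] using hsymm 1 (right_mem_Icc.mpr zero_le_one)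

/-- **Trajectory Reversibility (continuous time).**
If `f` is continuous, `L`-Lipschitz in the state and odd in the action, the
action curve `a` is continuous on `[0,2]` and satisfies the reversal condition
`a (1+t) = -a (1-t)` on `[0,1]`, and `x` solves `x' = f (x t, a t)` on `[0,2]`,
then `x (1+t) = x (1-t)` for all `t ∈ [0,1]`; in particular `x 2 = x 0`. -/
theorem trajectory_reversibility
    {d n : ℕ} (f : EuclideanSpace ℝ (Fin d) × EuclideanSpace ℝ (Fin n) → EuclideanSpace ℝ (Fin d))
    (L : ℝ)
    (hf_cont : Continuous f)
    (hf_lip : ∀ (x x' : EuclideanSpace ℝ (Fin d)) (a : EuclideanSpace ℝ (Fin n)),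
      ‖f (x, a) - f (x', a)‖ ≤ L * ‖x - x'‖)
    (hf_odd : ∀ (x : EuclideanSpace ℝ (Fin d)) (a : EuclideanSpace ℝ (Fin n)),
      f (x, -a) = -f (x, a))
    (a : ℝ → EuclideanSpace ℝ (Fin n))
    (ha_cont : ContinuousOn a (Icc 0 2))
    (ha_rev : ∀ t ∈ Icc (0:ℝ) 1, a (1 + t) = -a (1 - t))
    (x : ℝ → EuclideanSpace ℝ (Fin d))
    (hx : ∀ t ∈ Icc (0:ℝ) 2, HasDerivAt x (f (x t, a t)) t) :
    (∀ t ∈ Icc (0:ℝ) 1, x (1 + t) = x (1 - t)) ∧ x 2 = x 0 :=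
  trajectory_reversibility_general f L hf_lip hf_odd a ha_rev x hx
end

section
/- Let f : ℝ^d × ℝ^n → ℝ^d be L-Lipschitz in the state and odd in the action, let a : [0,2] → ℝ^n satisfy a(1+t) = -a(1-t) for all t ∈ [0,1], and let x : [0,2] → ℝ^d be differentiable with x'(t) = f(x(t), a(t)). Define d(t) := x(1+t) - x(1-t) for t ∈ [0,1]. Then d(0) = 0, d is differentiable with d'(t) = f(x(1-t), a(1-t)) - f(x(1+t), a(1-t)), and consequently ‖d'(t)‖ ≤ L‖d(t)‖ for all t ∈ [0,1]. -/
open Set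

/-! Differentiating `x (1 + t) - x (1 - t)` gives `x' (1 + t) + x' (1 - t)`. Oddness of `f` in the
action together with `a (1 + t) = -a (1 - t)` turns `x' (1 + t)` into `-f (x (1 + t), a (1 - t))`,
so the derivative is a difference of `f` at two states under the same action, which the
Lipschitz bound controls by `L * ‖x (1 + t) - x (1 - t)‖`. -/

theorem HasDerivAt.sub_comp_reflect {E : Type*} [NormedAddCommGroup E] [NormedSpace ℝ E]
    {x : ℝ → E} {v w : E} {c t : ℝ} (hplus : HasDerivAt x v (c + t))
    (hminus : HasDerivAt x w (c - t)) :
    HasDerivAt (fun s => x (c + s) - x (c - s)) (v + w) t := by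
  rw [← sub_neg_eq_add]
  exact (hplus.comp_const_add c t).sub (hminus.comp_const_sub c t)

/-- The deviation `d t = x (1+t) - x (1-t)` of a reversed trajectory satisfies
`d 0 = 0`, has derivative `d' t = f (x (1-t), a (1-t)) - f (x (1+t), a (1-t))`,
and consequently `‖d' t‖ ≤ L * ‖d t‖` on `[0,1]`. -/
theorem reversal_deviation_derivative
    {d n : ℕ} (f : EuclideanSpace ℝ (Fin d) × EuclideanSpace ℝ (Fin n) → EuclideanSpace ℝ (Fin d))
    (L : ℝ)
    (hf_lip : ∀ (x x' : EuclideanSpace ℝ (Fin d)) (a : EuclideanSpace ℝ (Fin n)),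
      ‖f (x, a) - f (x', a)‖ ≤ L * ‖x - x'‖)
    (hf_odd : ∀ (x : EuclideanSpace ℝ (Fin d)) (a : EuclideanSpace ℝ (Fin n)),
      f (x, -a) = -f (x, a))
    (a : ℝ → EuclideanSpace ℝ (Fin n))
    (ha_rev : ∀ t ∈ Icc (0:ℝ) 1, a (1 + t) = -a (1 - t))
    (x : ℝ → EuclideanSpace ℝ (Fin d))
    (hx : ∀ t ∈ Icc (0:ℝ) 2, HasDerivAt x (f (x t, a t)) t)
    (dev : ℝ → EuclideanSpace ℝ (Fin d))
    (hdev : dev = fun t => x (1 + t) - x (1 - t)) :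
    dev 0 = 0 ∧
    (∀ t ∈ Icc (0:ℝ) 1,
      HasDerivAt dev (f (x (1 - t), a (1 - t)) - f (x (1 + t), a (1 - t))) t) ∧
    (∀ t ∈ Icc (0:ℝ) 1,
      ‖f (x (1 - t), a (1 - t)) - f (x (1 + t), a (1 - t))‖ ≤ L * ‖dev t‖) := by
  subst hdev
  refine ⟨by simp, fun t ht => ?_, fun t _ => ?_⟩
  · have hplus : 1 + t ∈ Icc (0:ℝ) 2 := ⟨by linarith [ht.1], by linarith [ht.2]⟩
    have hminus : 1 - t ∈ Icc (0:ℝ) 2 := ⟨by linarith [ht.2], by linarith [ht.1]⟩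
    have hflip : f (x (1 + t), a (1 + t)) = -f (x (1 + t), a (1 - t)) := by
      rw [ha_rev t ht, hf_odd]
    have hderiv := (hx _ hplus).sub_comp_reflect (hx _ hminus)
    rwa [hflip, neg_add_eq_sub] at hderiv
  · simpa only [norm_sub_rev (x (1 - t))] using hf_lip (x (1 - t)) (x (1 + t)) (a (1 - t))
end

section
/- Let f : ℝ^d × ℝ^n → ℝ^d be L-Lipschitz in the state with L > 0 and M-bounded, and suppose f is odd in the action up to a residual bounded by E ≥ 0, i.e. ‖f(x, -a) + f(x, a)‖ ≤ E for all x ∈ ℝ^d, a ∈ ℝ^n. Fix a horizon T ∈ ℕ, a step size ν > 0, and an action sequence a : ℕ → ℝ^n satisfying the mirror reversal condition a(T + k) = -a(T - 1 - k) for all 0 ≤ k ≤ T - 1, and let x : ℕ → ℝ^d be the Euler iterates x(k+1) = x(k) + ν f(x(k), a(k)). Then ‖x(0) - x(2T)‖ ≤ (ν M + E / L)(exp(T L ν) - 1). -/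
/-- **Residual Inversing Actions (exponential form).** If `f` is `L`-Lipschitz
in the state with `L > 0`, `M`-bounded, and odd in the action up to a residual
bounded by `E ≥ 0`, then Euler iterates with mirror-reversed actions satisfy
`‖x 0 - x (2T)‖ ≤ (ν M + E / L) (exp (T L ν) - 1)`. -/
theorem residual_soft_reversibility_exp
    {d n : ℕ} (f : EuclideanSpace ℝ (Fin d) × EuclideanSpace ℝ (Fin n) → EuclideanSpace ℝ (Fin d))
    (L M E ν : ℝ) (T : ℕ)
    (hL : 0 < L) (hE : 0 ≤ E)
    (hf_lip : ∀ (x x' : EuclideanSpace ℝ (Fin d)) (a : EuclideanSpace ℝ (Fin n)),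
      ‖f (x, a) - f (x', a)‖ ≤ L * ‖x - x'‖)
    (hf_bdd : ∀ (x : EuclideanSpace ℝ (Fin d)) (a : EuclideanSpace ℝ (Fin n)), ‖f (x, a)‖ ≤ M)
    (hf_res : ∀ (x : EuclideanSpace ℝ (Fin d)) (a : EuclideanSpace ℝ (Fin n)),
      ‖f (x, -a) + f (x, a)‖ ≤ E)
    (hν : 0 < ν)
    (a : ℕ → EuclideanSpace ℝ (Fin n))
    (ha_rev : ∀ k < T, a (T + k) = -a (T - 1 - k))
    (x : ℕ → EuclideanSpace ℝ (Fin d))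
    (hx : ∀ k, x (k + 1) = x k + ν • f (x k, a k)) :
    ‖x 0 - x (2 * T)‖ ≤ (ν * M + E / L) * (Real.exp (T * L * ν) - 1) := by
  have hM : 0 ≤ M := le_trans (norm_nonneg _) (hf_bdd (x 0) (a 0))
  set C : ℝ := ν * M + E / L with hC
  have hC0 : 0 ≤ C := by positivity
  have hLC : L * C = L * (ν * M) + E := by
    rw [hC]; field_simp
  have key : ∀ k, k ≤ T → ‖x (T - k) - x (T + k)‖ ≤ C * ((1 + ν * L) ^ k - 1) := by
    intro k
    induction k with
    | zero => intro _; simp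
    | succ k ih =>
      intro hk1
      have hkT : k < T := hk1
      have ihk := ih hkT.le
      set m := T - (k + 1) with hm
      have hm1 : m + 1 = T - k := by omega
      have hT1k : T - 1 - k = m := by omega
      have haT : a (T + k) = -a m := by rw [ha_rev k hkT, hT1k]
      have hxf : x m - x (T + (k + 1)) =
          (x (m + 1) - x (T + k)) - ν • (f (x m, a m) + f (x (T + k), -a m)) := by
        have h1 := hx m
        have h2 := hx (T + k)
        rw [haT] at h2
        have h3 : T + (k + 1) = (T + k) + 1 := by omega
        rw [h3, h2, h1]
        module
      have e1 : ‖x (m + 1) - x (T + k)‖ ≤ C * ((1 + ν * L) ^ k - 1) := by rw [hm1]; exact ihk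
      have hstep : ‖x m - x (m + 1)‖ ≤ ν * M := by
        rw [hx m]
        have h4 : x m - (x m + ν • f (x m, a m)) = -(ν • f (x m, a m)) := by module
        rw [h4, norm_neg, norm_smul, Real.norm_eq_abs, abs_of_pos hν]
        exact mul_le_mul_of_nonneg_left (hf_bdd _ _) hν.le
      have e2 : ‖x m - x (T + k)‖ ≤ ν * M + C * ((1 + ν * L) ^ k - 1) := by
        calc ‖x m - x (T + k)‖ ≤ ‖x m - x (m + 1)‖ + ‖x (m + 1) - x (T + k)‖ :=
              norm_sub_le_norm_sub_add_norm_sub _ _ _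
          _ ≤ _ := add_le_add hstep e1
      have e3 : ‖f (x m, a m) + f (x (T + k), -a m)‖ ≤ E + L * ‖x m - x (T + k)‖ := by
        calc ‖f (x m, a m) + f (x (T + k), -a m)‖
            = ‖(f (x (T + k), -a m) + f (x (T + k), a m)) +
                (f (x m, a m) - f (x (T + k), a m))‖ := by congr 1; abel
          _ ≤ ‖f (x (T + k), -a m) + f (x (T + k), a m)‖ +
                ‖f (x m, a m) - f (x (T + k), a m)‖ := norm_add_le _ _
          _ ≤ E + L * ‖x m - x (T + k)‖ :=
                add_le_add (hf_res (x (T + k)) (a m)) (hf_lip (x m) (x (T + k)) (a m))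
      have e3' : ‖f (x m, a m) + f (x (T + k), -a m)‖ ≤
          E + L * (ν * M + C * ((1 + ν * L) ^ k - 1)) := by
        refine e3.trans ?_
        gcongr
      calc ‖x (T - (k + 1)) - x (T + (k + 1))‖
          = ‖(x (m + 1) - x (T + k)) - ν • (f (x m, a m) + f (x (T + k), -a m))‖ := by
            rw [← hm, hxf]
        _ ≤ ‖x (m + 1) - x (T + k)‖ + ν * ‖f (x m, a m) + f (x (T + k), -a m)‖ := by
            refine (norm_sub_le _ _).trans ?_
            rw [norm_smul, Real.norm_eq_abs, abs_of_pos hν]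
        _ ≤ C * ((1 + ν * L) ^ k - 1) +
              ν * (E + L * (ν * M + C * ((1 + ν * L) ^ k - 1))) :=
            add_le_add e1 (mul_le_mul_of_nonneg_left e3' hν.le)
        _ = C * ((1 + ν * L) ^ (k + 1) - 1) := by
            have hp : (1 + ν * L) ^ (k + 1) = (1 + ν * L) * (1 + ν * L) ^ k := by ring
            rw [hp, hC]
            have hLne : L ≠ 0 := hL.ne'
            field_simp
            ring
  have hkey := key T le_rfl
  simp only [Nat.sub_self] at hkey
  have hexp : (1 + ν * L) ^ T ≤ Real.exp (T * L * ν) := by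
    have h1 : 1 + ν * L ≤ Real.exp (ν * L) := by
      linarith [Real.add_one_le_exp (ν * L)]
    calc (1 + ν * L) ^ T ≤ (Real.exp (ν * L)) ^ T := by
          exact pow_le_pow_left₀ (by positivity) h1 T
      _ = Real.exp (T * (ν * L)) := (Real.exp_nat_mul _ T).symm
      _ = Real.exp (T * L * ν) := by ring_nf
  calc ‖x 0 - x (2 * T)‖ = ‖x 0 - x (T + T)‖ := by rw [two_mul]
    _ ≤ C * ((1 + ν * L) ^ T - 1) := hkey
    _ ≤ C * (Real.exp (T * L * ν) - 1) := by gcongr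
end

section
/- Let f : ℝ^d × ℝ^n → ℝ^d be L-Lipschitz in the state with L > 0 and M-bounded, and suppose f is odd in the action up to a residual bounded by E ≥ 0, i.e. ‖f(x, -a) + f(x, a)‖ ≤ E for all x ∈ ℝ^d, a ∈ ℝ^n. Fix a horizon T ∈ ℕ, a step size ν > 0, and an action sequence a : ℕ → ℝ^n satisfying the mirror reversal condition a(T + k) = -a(T - 1 - k) for all 0 ≤ k ≤ T - 1, and let x : ℕ → ℝ^d be the Euler iterates x(k+1) = x(k) + ν f(x(k), a(k)). Then ‖x(0) - x(2T)‖ ≤ (M ν + E / L)((1 + L ν)^T - 1). -/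
/-!
Compare the forward and backward halves of the trajectory: let `D k = x (T - k) - x (T + k)`.
Step `k` of the mirrored half undoes step `T - 1 - k` of the first half up to the Lipschitz
error between the two base points, which are `‖D k‖ + ν M` apart, and the oddness residual
`E`. Hence `‖D (k + 1)‖ ≤ (1 + L ν) ‖D k‖ + L ν² M + ν E` with `D 0 = 0`, and the discrete
Grönwall inequality gives `‖D T‖ ≤ (M ν + E / L) ((1 + L ν)^T - 1)`.
-/

theorem discrete_gronwall_pow_sub_one {e : ℕ → ℝ} {q C : ℝ} {N : ℕ} (hq : 0 ≤ q)
    (h0 : e 0 ≤ 0) (hstep : ∀ k < N, e (k + 1) ≤ q * e k + (q - 1) * C) :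
    ∀ k ≤ N, e k ≤ C * (q ^ k - 1) := by
  intro k hk
  induction k with
  | zero => simpa using h0
  | succ k ih =>
    calc e (k + 1) ≤ q * e k + (q - 1) * C := hstep k hk
      _ ≤ q * (C * (q ^ k - 1)) + (q - 1) * C := by gcongr; exact ih (by omega)
      _ = C * (q ^ (k + 1) - 1) := by ring

section EulerStep

variable {V A : Type*} [NormedAddCommGroup V] [NormedSpace ℝ V] [Neg A]
  {f : V × A → V} {L M E ν : ℝ}

theorem norm_sub_euler_step_neg_le (hν : 0 ≤ ν) (hL : 0 ≤ L)
    (hf_lip : ∀ (x x' : V) (a : A), ‖f (x, a) - f (x', a)‖ ≤ L * ‖x - x'‖)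
    (hf_bdd : ∀ (x : V) (a : A), ‖f (x, a)‖ ≤ M)
    (hf_res : ∀ (x : V) (a : A), ‖f (x, -a) + f (x, a)‖ ≤ E) (u y : V) (b : A) :
    ‖u - (y + ν • f (y, -b))‖ ≤
      (1 + L * ν) * ‖u + ν • f (u, b) - y‖ + L * ν * (ν * M) + ν * E := by
  set D := u + ν • f (u, b) - y
  have h_base : ‖u - y‖ ≤ ‖D‖ + ν * M := by
    calc ‖u - y‖ = ‖D - ν • f (u, b)‖ := by congr 1; simp only [D]; abel
      _ ≤ ‖D‖ + ν * ‖f (u, b)‖ := by rw [← norm_smul_of_nonneg hν]; exact norm_sub_le _ _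
      _ ≤ ‖D‖ + ν * M := by gcongr; exact hf_bdd u b
  calc ‖u - (y + ν • f (y, -b))‖
      = ‖D - ν • (f (u, b) - f (y, b)) - ν • (f (y, -b) + f (y, b))‖ := by
        congr 1; simp only [D]; module
    _ ≤ ‖D‖ + ν * ‖f (u, b) - f (y, b)‖ + ν * ‖f (y, -b) + f (y, b)‖ := by
        rw [← norm_smul_of_nonneg hν, ← norm_smul_of_nonneg hν]
        exact (norm_sub_le _ _).trans (by gcongr; exact norm_sub_le _ _)
    _ ≤ ‖D‖ + ν * (L * (‖D‖ + ν * M)) + ν * E := by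
        gcongr
        · exact (hf_lip u y b).trans (by gcongr)
        · exact hf_res y b
    _ = (1 + L * ν) * ‖D‖ + L * ν * (ν * M) + ν * E := by ring

end EulerStep

theorem residual_soft_reversibility_geom_general
    {d n : ℕ} (f : EuclideanSpace ℝ (Fin d) × EuclideanSpace ℝ (Fin n) → EuclideanSpace ℝ (Fin d))
    (L M E ν : ℝ) (T : ℕ)
    (hL : 0 < L)
    (hf_lip : ∀ (x x' : EuclideanSpace ℝ (Fin d)) (a : EuclideanSpace ℝ (Fin n)),
      ‖f (x, a) - f (x', a)‖ ≤ L * ‖x - x'‖)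
    (hf_bdd : ∀ (x : EuclideanSpace ℝ (Fin d)) (a : EuclideanSpace ℝ (Fin n)), ‖f (x, a)‖ ≤ M)
    (hf_res : ∀ (x : EuclideanSpace ℝ (Fin d)) (a : EuclideanSpace ℝ (Fin n)),
      ‖f (x, -a) + f (x, a)‖ ≤ E)
    (hν : 0 < ν)
    (a : ℕ → EuclideanSpace ℝ (Fin n))
    (ha_rev : ∀ k < T, a (T + k) = -a (T - 1 - k))
    (x : ℕ → EuclideanSpace ℝ (Fin d))
    (hx : ∀ k, x (k + 1) = x k + ν • f (x k, a k)) :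
    ‖x 0 - x (2 * T)‖ ≤ (M * ν + E / L) * ((1 + L * ν) ^ T - 1) := by
  have h_step : ∀ k < T, ‖x (T - (k + 1)) - x (T + (k + 1))‖ ≤
      (1 + L * ν) * ‖x (T - k) - x (T + k)‖ + (1 + L * ν - 1) * (M * ν + E / L) := by
    intro k hk
    have h_fwd : x (T - k) = x (T - (k + 1)) + ν • f (x (T - (k + 1)), a (T - 1 - k)) := by
      rw [show T - k = T - (k + 1) + 1 by omega, hx, show T - 1 - k = T - (k + 1) by omega]
    have h_bwd : x (T + (k + 1)) = x (T + k) + ν • f (x (T + k), -a (T - 1 - k)) := by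
      rw [← add_assoc, hx, ha_rev k hk]
    have h_const : (1 + L * ν - 1) * (M * ν + E / L) = L * ν * (ν * M) + ν * E := by
      field_simp
      ring
    rw [h_fwd, h_bwd, h_const, ← add_assoc]
    exact norm_sub_euler_step_neg_le hν.le hL.le hf_lip hf_bdd hf_res _ _ _
  have h_T := discrete_gronwall_pow_sub_one (e := fun k ↦ ‖x (T - k) - x (T + k)‖)
    (by positivity) (by simp) h_step T le_rfl
  simpa [two_mul] using h_T

/-- **Residual Inversing Actions (geometric form).** If `f` is `L`-Lipschitz
in the state with `L > 0`, `M`-bounded, and odd in the action up to a residual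
bounded by `E ≥ 0`, then Euler iterates with mirror-reversed actions satisfy
`‖x 0 - x (2T)‖ ≤ (M ν + E / L) ((1 + L ν)^T - 1)`. -/
theorem residual_soft_reversibility_geom
    {d n : ℕ} (f : EuclideanSpace ℝ (Fin d) × EuclideanSpace ℝ (Fin n) → EuclideanSpace ℝ (Fin d))
    (L M E ν : ℝ) (T : ℕ)
    (hL : 0 < L) (hE : 0 ≤ E)
    (hf_lip : ∀ (x x' : EuclideanSpace ℝ (Fin d)) (a : EuclideanSpace ℝ (Fin n)),
      ‖f (x, a) - f (x', a)‖ ≤ L * ‖x - x'‖)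
    (hf_bdd : ∀ (x : EuclideanSpace ℝ (Fin d)) (a : EuclideanSpace ℝ (Fin n)), ‖f (x, a)‖ ≤ M)
    (hf_res : ∀ (x : EuclideanSpace ℝ (Fin d)) (a : EuclideanSpace ℝ (Fin n)),
      ‖f (x, -a) + f (x, a)‖ ≤ E)
    (hν : 0 < ν)
    (a : ℕ → EuclideanSpace ℝ (Fin n))
    (ha_rev : ∀ k < T, a (T + k) = -a (T - 1 - k))
    (x : ℕ → EuclideanSpace ℝ (Fin d))
    (hx : ∀ k, x (k + 1) = x k + ν • f (x k, a k)) :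
    ‖x 0 - x (2 * T)‖ ≤ (M * ν + E / L) * ((1 + L * ν) ^ T - 1) :=
  residual_soft_reversibility_geom_general f L M E ν T hL hf_lip hf_bdd hf_res hν a ha_rev x hx
end

section
/- Let f : ℝ^d × ℝ^n → ℝ^d be L-Lipschitz in the state and odd in the action, let ν > 0 satisfy L ν < 1, and for a state x₀ ∈ ℝ^d and action a ∈ ℝ^n define the two Euler steps x₁ := x₀ + ν f(x₀, a) and x₂ := x₁ + ν f(x₁, -a). Then ‖x₀ - x₂‖ ≤ L ν ‖x₁ - x₀‖; in particular, if x₁ ≠ x₀ then ‖x₀ - x₂‖ < ‖x₁ - x₀‖, i.e. taking the opposite action strictly reduces the distance to the previous state (soft reversibility of a single action triplet). -/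
/-- **Soft reversibility of a single action triplet.** If `f` is `L`-Lipschitz
in the state and odd in the action, `L ν < 1`, `x₁ = x₀ + ν • f (x₀, a)` and
`x₂ = x₁ + ν • f (x₁, -a)`, then `‖x₀ - x₂‖ ≤ L ν ‖x₁ - x₀‖`; in particular,
if `x₁ ≠ x₀` then `‖x₀ - x₂‖ < ‖x₁ - x₀‖`. -/
theorem soft_reversibility_single_step
    {d n : ℕ} (f : EuclideanSpace ℝ (Fin d) × EuclideanSpace ℝ (Fin n) → EuclideanSpace ℝ (Fin d))
    (L ν : ℝ)
    (hf_lip : ∀ (x x' : EuclideanSpace ℝ (Fin d)) (a : EuclideanSpace ℝ (Fin n)),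
      ‖f (x, a) - f (x', a)‖ ≤ L * ‖x - x'‖)
    (hf_odd : ∀ (x : EuclideanSpace ℝ (Fin d)) (a : EuclideanSpace ℝ (Fin n)),
      f (x, -a) = -f (x, a))
    (hν : 0 < ν) (hLν : L * ν < 1)
    (x₀ : EuclideanSpace ℝ (Fin d)) (a : EuclideanSpace ℝ (Fin n))
    (x₁ x₂ : EuclideanSpace ℝ (Fin d))
    (hx₁ : x₁ = x₀ + ν • f (x₀, a))
    (hx₂ : x₂ = x₁ + ν • f (x₁, -a)) :
    ‖x₀ - x₂‖ ≤ L * ν * ‖x₁ - x₀‖ ∧ (x₁ ≠ x₀ → ‖x₀ - x₂‖ < ‖x₁ - x₀‖) := by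
  have key : x₀ - x₂ = ν • (f (x₁, a) - f (x₀, a)) := by
    rw [hx₂, hf_odd, hx₁]
    simp [smul_sub]
    abel
  have h1 : ‖x₀ - x₂‖ ≤ L * ν * ‖x₁ - x₀‖ := by
    rw [key, norm_smul, Real.norm_eq_abs, abs_of_pos hν]
    calc ν * ‖f (x₁, a) - f (x₀, a)‖ ≤ ν * (L * ‖x₁ - x₀‖) := by
          exact mul_le_mul_of_nonneg_left (hf_lip x₁ x₀ a) hν.le
      _ = L * ν * ‖x₁ - x₀‖ := by ring
  refine ⟨h1, fun hne => ?_⟩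
  have hpos : 0 < ‖x₁ - x₀‖ := by
    rw [norm_pos_iff, sub_ne_zero]; exact hne
  calc ‖x₀ - x₂‖ ≤ L * ν * ‖x₁ - x₀‖ := h1
    _ < 1 * ‖x₁ - x₀‖ := by exact mul_lt_mul_of_pos_right hLν hpos
    _ = ‖x₁ - x₀‖ := one_mul _
end
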